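/- For any infinite cardinal λ, the topology τ_mi is the coarsest inverse semigroup topology on the λ-polycyclic monoid P_λ: for every Hausdorff topology τ on P_λ making (P_λ, τ) a topological inverse semigroup, τ_mi ⊆ τ. In particular, (P_λ, τ_mi) is a minimal topological inverse semigroup (no Hausdorff inverse semigroup topology on P_λ is strictly coarser than τ_mi). -/

import Mathlib

universe u v

/-- An inverse semigroup: every element has a unique (von Neumann) inverse. -/
class InverseSemigroup (S : Type u) extends Semigroup S, Inv S where
  mul_inv_mul : ∀ a : S, a * a⁻¹ * a = a
  inv_mul_inv : ∀ a : S, a⁻¹ * a * a⁻¹ = a⁻¹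
  inv_unique : ∀ a b : S, a * b * a = a → b * a * b = b → b = a⁻¹

/-- The λ-polycyclic monoid over the index type `ι` (of cardinality λ), realized as
`(M_λ × M_λ) ∪ {0}` where `M_λ = FreeMonoid ι` is the free monoid on λ generators;
the pair `(a, b)` encodes the element `a⁻¹b` and `none` is the zero. -/
abbrev PolyMon (ι : Type u) : Type u := Option (FreeMonoid ι × FreeMonoid ι)

/-- The nonzero element `a⁻¹b` of the polycyclic monoid. -/
def polyEl {ι : Type u} (a b : FreeMonoid ι) : PolyMon ι := some (a, b)

instance {ι : Type u} : Zero (PolyMon ι) := ⟨none⟩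

instance {ι : Type u} : One (PolyMon ι) := ⟨polyEl 1 1⟩

open Classical in
/-- Multiplication of the polycyclic monoid:
`a⁻¹b · c⁻¹d = (c₁a)⁻¹d` if `c = c₁b`; `= a⁻¹(b₁d)` if `b = b₁c`; `= 0` otherwise,
and `0` is a two-sided zero. -/
noncomputable def polyMul {ι : Type u} (x y : PolyMon ι) : PolyMon ι :=
  Option.bind x fun p => Option.bind y fun q =>
    if h : ∃ c₁ : FreeMonoid ι, q.1 = c₁ * p.2 then some (Classical.choose h * p.1, q.2)
    else if h' : ∃ b₁ : FreeMonoid ι, p.2 = b₁ * q.1 then some (p.1, Classical.choose h' * q.2)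
    else none

noncomputable instance {ι : Type u} : Mul (PolyMon ι) := ⟨polyMul⟩

/-- Inversion of the polycyclic monoid: `(a⁻¹b)⁻¹ = b⁻¹a` and `0⁻¹ = 0`. -/
instance {ι : Type u} : Inv (PolyMon ι) :=
  ⟨fun x => Option.map (fun p => (p.2, p.1)) x⟩

/-- The basic neighbourhood `U_A(0) = {a⁻¹b : a, b ∈ M_λ \ A} ∪ {0}` of zero. -/
def U0 {ι : Type u} (A : Set (FreeMonoid ι)) : Set (PolyMon ι) :=
  {x | x = 0 ∨ ∃ a b : FreeMonoid ι, a ∉ A ∧ b ∉ A ∧ x = polyEl a b}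

/-- The topology `τ_mi` on the polycyclic monoid: all nonzero elements are isolated and
the sets `U_A(0)`, for `A` a finite subset of the free monoid, form a base at `0`. -/
def tauMi (ι : Type u) : TopologicalSpace (PolyMon ι) :=
  TopologicalSpace.generateFrom
    ({s | ∃ x : PolyMon ι, x ≠ 0 ∧ s = {x}} ∪
     {s | ∃ A : Set (FreeMonoid ι), A.Finite ∧ s = U0 A})

/-!
Let `t` be a T₁ topology on `P_λ` with continuous multiplication and inversion. For a letter `s`,
`(1⁻¹s) · c⁻¹c` is nonzero only if the word `c` is empty or ends in `s`. Requiring this of both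
`y y⁻¹` and `y⁻¹ y` for two distinct letters is an open condition at `1` that only `y = 1` meets,
so `1` is isolated. The continuous map `y ↦ (1⁻¹a) · y · (b⁻¹1)` sends `a⁻¹b` to `1`, and its
fibre over `1` is finite because it consists of elements `c⁻¹d` with `c`, `d` suffixes of `a`,
`b`; so every `a⁻¹b` is isolated too. Finally, `0` has a neighbourhood on which `y y⁻¹` and
`y⁻¹ y` avoid the finitely many idempotents `u⁻¹u`, `u ∈ A`, and it lies inside `U_A(0)`.
-/

open Topology

namespace FreeMonoid

variable {α : Type*}

theorem eq_one_or_exists_eq_mul_of {i : α} {c : FreeMonoid α}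
    (h : (∃ c₁, c = c₁ * of i) ∨ ∃ b₁, of i = b₁ * c) : c = 1 ∨ ∃ c₁, c = c₁ * of i := by
  rcases h with h | ⟨b₁, h⟩
  · exact .inr h
  have hlen := congrArg length h
  rw [length_mul, length_of] at hlen
  by_cases hc : c.length = 0
  · exact .inl (length_eq_zero.mp hc)
  · obtain rfl : b₁ = 1 := length_eq_zero.mp (by omega)
    exact .inr ⟨1, h.symm⟩

theorem eq_one_of_comparable_of_ne {i j : α} (hij : i ≠ j) {c : FreeMonoid α}
    (hi : (∃ c₁, c = c₁ * of i) ∨ ∃ b₁, of i = b₁ * c)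
    (hj : (∃ c₁, c = c₁ * of j) ∨ ∃ b₁, of j = b₁ * c) : c = 1 := by
  rcases eq_one_or_exists_eq_mul_of hi with hc | ⟨c₁, rfl⟩
  · exact hc
  rcases eq_one_or_exists_eq_mul_of hj with hc | ⟨c₂, hc₂⟩
  · exact hc
  have := List.append_inj' (congrArg toList hc₂) rfl
  exact absurd (List.singleton_injective this.2) hij

theorem finite_setOf_suffix (a : FreeMonoid α) : {c | ∃ w, a = w * c}.Finite := by
  refine ((List.finite_toSet a.toList.tails).image ofList).subset ?_
  rintro c ⟨w, rfl⟩
  exact ⟨c.toList, (List.mem_tails _ _).mpr ⟨w.toList, rfl⟩, rfl⟩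

end FreeMonoid

namespace PolyMon

open FreeMonoid

variable {ι : Type u}

theorem eq_zero_or_eq_polyEl (x : PolyMon ι) : x = 0 ∨ ∃ a b, x = polyEl a b := by
  rcases x with _ | ⟨a, b⟩
  exacts [Or.inl rfl, Or.inr ⟨a, b, rfl⟩]

theorem polyEl_ne_zero (a b : FreeMonoid ι) : polyEl a b ≠ 0 := nofun

theorem polyEl_inj {a b c d : FreeMonoid ι} : polyEl a b = polyEl c d ↔ a = c ∧ b = d := by
  simp [polyEl]

theorem one_def : (1 : PolyMon ι) = polyEl 1 1 := rfl

protected theorem one_ne_zero : (1 : PolyMon ι) ≠ 0 := polyEl_ne_zero 1 1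

protected theorem zero_mul (x : PolyMon ι) : 0 * x = 0 := rfl

protected theorem mul_zero (x : PolyMon ι) : x * 0 = 0 := by
  cases x <;> rfl

theorem inv_polyEl (a b : FreeMonoid ι) : (polyEl a b)⁻¹ = polyEl b a := rfl

open Classical in
theorem polyEl_mul_polyEl (a b c d : FreeMonoid ι) :
    polyEl a b * polyEl c d =
      if h : ∃ c₁, c = c₁ * b then polyEl (Classical.choose h * a) d
      else if h' : ∃ b₁, b = b₁ * c then polyEl a (Classical.choose h' * d)
      else 0 := rfl

theorem polyEl_mul_polyEl_mul (a b c d : FreeMonoid ι) :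
    polyEl a b * polyEl (c * b) d = polyEl (c * a) d := by
  have h : ∃ c₁, c * b = c₁ * b := ⟨c, rfl⟩
  rw [polyEl_mul_polyEl, dif_pos h, mul_right_cancel (Classical.choose_spec h).symm]

theorem polyEl_mul_mul_polyEl (a b c d : FreeMonoid ι) :
    polyEl a (b * c) * polyEl c d = polyEl a (b * d) := by
  by_cases h : ∃ c₁, c = c₁ * (b * c)
  · -- both branches of `polyMul` apply, which forces `b = 1`
    obtain ⟨c₁, hc₁⟩ := h
    have hb : b = 1 := (mul_eq_one'.mp (mul_eq_right.mp (by rw [mul_assoc]; exact hc₁.symm))).2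
    subst hb
    simpa using polyEl_mul_polyEl_mul a c 1 d
  · have h' : ∃ b₁, b * c = b₁ * c := ⟨b, rfl⟩
    rw [polyEl_mul_polyEl, dif_neg h, dif_pos h', mul_right_cancel (Classical.choose_spec h').symm]

theorem polyEl_mul_polyEl_eq_zero {b c : FreeMonoid ι} (a d : FreeMonoid ι)
    (hcb : ¬∃ c₁, c = c₁ * b) (hbc : ¬∃ b₁, b = b₁ * c) : polyEl a b * polyEl c d = 0 := by
  rw [polyEl_mul_polyEl, dif_neg hcb, dif_neg hbc]

theorem comparable_of_polyEl_mul_polyEl_ne_zero {a b c d : FreeMonoid ι}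
    (h : polyEl a b * polyEl c d ≠ 0) : (∃ c₁, c = c₁ * b) ∨ ∃ b₁, b = b₁ * c := by
  by_contra hcmp
  exact h (polyEl_mul_polyEl_eq_zero a d (not_or.mp hcmp).1 (not_or.mp hcmp).2)

theorem polyEl_mul_polyEl_cases (a b c d : FreeMonoid ι) :
    (∃ c₁, c = c₁ * b ∧ polyEl a b * polyEl c d = polyEl (c₁ * a) d) ∨
    (∃ b₁, b = b₁ * c ∧ polyEl a b * polyEl c d = polyEl a (b₁ * d)) ∨
    polyEl a b * polyEl c d = 0 := by
  by_cases hcb : ∃ c₁, c = c₁ * b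
  · obtain ⟨c₁, rfl⟩ := hcb
    exact .inl ⟨c₁, rfl, polyEl_mul_polyEl_mul a b c₁ d⟩
  by_cases hbc : ∃ b₁, b = b₁ * c
  · obtain ⟨b₁, rfl⟩ := hbc
    exact .inr (.inl ⟨b₁, rfl, polyEl_mul_mul_polyEl a b₁ c d⟩)
  exact .inr (.inr (polyEl_mul_polyEl_eq_zero a d hcb hbc))

theorem polyEl_mul_inv (a b : FreeMonoid ι) : polyEl a b * (polyEl a b)⁻¹ = polyEl a a := by
  simpa [inv_polyEl] using polyEl_mul_polyEl_mul a b 1 a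

theorem inv_mul_polyEl (a b : FreeMonoid ι) : (polyEl a b)⁻¹ * polyEl a b = polyEl b b := by
  simpa [inv_polyEl] using polyEl_mul_polyEl_mul b a 1 b

theorem polyEl_mul_one (a b : FreeMonoid ι) : polyEl a b * 1 = polyEl a b := by
  simpa [one_def] using polyEl_mul_mul_polyEl a b 1 1

protected theorem one_mul_one : (1 : PolyMon ι) * 1 = 1 := polyEl_mul_one 1 1


theorem eq_one_of_polyEl_mul_ne_zero {i j : ι} (hij : i ≠ j) {y : PolyMon ι}
    (hi : polyEl 1 (of i) * (y * y⁻¹) ≠ 0 ∧ polyEl 1 (of i) * (y⁻¹ * y) ≠ 0)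
    (hj : polyEl 1 (of j) * (y * y⁻¹) ≠ 0 ∧ polyEl 1 (of j) * (y⁻¹ * y) ≠ 0) : y = 1 := by
  obtain rfl | ⟨c, d, rfl⟩ := eq_zero_or_eq_polyEl y
  · exact absurd (PolyMon.mul_zero _) hi.1
  rw [polyEl_mul_inv, inv_mul_polyEl] at hi hj
  have hc := eq_one_of_comparable_of_ne hij (comparable_of_polyEl_mul_polyEl_ne_zero hi.1)
    (comparable_of_polyEl_mul_polyEl_ne_zero hj.1)
  have hd := eq_one_of_comparable_of_ne hij (comparable_of_polyEl_mul_polyEl_ne_zero hi.2)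
    (comparable_of_polyEl_mul_polyEl_ne_zero hj.2)
  rw [hc, hd, one_def]

theorem exists_suffix_of_polyEl_mul_mul_polyEl_eq_one {a b : FreeMonoid ι} {y : PolyMon ι}
    (h : polyEl 1 a * y * polyEl b 1 = 1) :
    ∃ c d, y = polyEl c d ∧ (∃ w, a = w * c) ∧ ∃ w, b = w * d := by
  obtain rfl | ⟨c, d, rfl⟩ := eq_zero_or_eq_polyEl y
  · exact absurd h.symm (by rw [PolyMon.mul_zero]; exact PolyMon.one_ne_zero)
  refine ⟨c, d, rfl, ?_⟩
  rcases polyEl_mul_polyEl_cases 1 a c d with ⟨e, rfl, he⟩ | ⟨e, rfl, he⟩ | he <;> rw [he] at h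
  · rw [mul_one] at h
    rcases polyEl_mul_polyEl_cases e d b 1 with ⟨f, rfl, hf⟩ | ⟨f, rfl, hf⟩ | hf <;> rw [hf] at h
    · obtain ⟨rfl, rfl⟩ := mul_eq_one'.mp (polyEl_inj.mp h).1
      exact ⟨⟨1, by simp⟩, 1, rfl⟩
    · obtain ⟨rfl, hf1⟩ := polyEl_inj.mp h
      obtain rfl : f = 1 := (mul_one f).symm.trans hf1
      exact ⟨⟨1, by simp⟩, 1, by simp⟩
    · exact absurd h.symm PolyMon.one_ne_zero
  · refine ⟨⟨e, rfl⟩, ?_⟩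
    rcases polyEl_mul_polyEl_cases 1 (e * d) b 1 with ⟨f, rfl, -⟩ | ⟨f, hf, hf'⟩ | hf
    · exact ⟨f * e, (mul_assoc _ _ _).symm⟩
    · rw [hf', one_def, polyEl_inj, mul_one] at h
      rw [h.2, one_mul] at hf
      exact ⟨e, hf.symm⟩
    · exact absurd (hf ▸ h).symm PolyMon.one_ne_zero
  · exact absurd h.symm (by rw [PolyMon.zero_mul]; exact PolyMon.one_ne_zero)

section Topology

variable [TopologicalSpace (PolyMon ι)] [T1Space (PolyMon ι)]
  [ContinuousMul (PolyMon ι)] [ContinuousInv (PolyMon ι)]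

theorem isOpen_singleton_one [Nontrivial ι] : IsOpen {(1 : PolyMon ι)} := by
  obtain ⟨i, j, hij⟩ := exists_pair_ne ι
  have hne : ∀ (s : ι) (f : PolyMon ι → PolyMon ι), Continuous f → f 1 = 1 →
      ∀ᶠ y in 𝓝 1, polyEl 1 (of s) * f y ≠ 0 := fun s f hf hf1 =>
    (show Continuous fun y => polyEl 1 (of s) * f y by fun_prop).continuousAt.eventually_ne
      (by rw [hf1, polyEl_mul_one]; exact polyEl_ne_zero _ _)
  have hmul_inv : Continuous fun y : PolyMon ι => y * y⁻¹ := by fun_prop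
  have hinv_mul : Continuous fun y : PolyMon ι => y⁻¹ * y := by fun_prop
  have h1 : ∀ᶠ y in 𝓝 (1 : PolyMon ι), y = 1 := by
    filter_upwards [hne i _ hmul_inv PolyMon.one_mul_one, hne i _ hinv_mul PolyMon.one_mul_one,
      hne j _ hmul_inv PolyMon.one_mul_one, hne j _ hinv_mul PolyMon.one_mul_one]
      with y hi₁ hi₂ hj₁ hj₂
    exact eq_one_of_polyEl_mul_ne_zero hij ⟨hi₁, hi₂⟩ ⟨hj₁, hj₂⟩
  exact isOpen_iff_mem_nhds.mpr fun x hx => hx ▸ h1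

theorem isOpen_singleton_polyEl [Nontrivial ι] (a b : FreeMonoid ι) : IsOpen {polyEl a b} := by
  have hcont : Continuous fun y : PolyMon ι => polyEl 1 a * y * polyEl b 1 := by fun_prop
  have hab : polyEl 1 a * polyEl a b * polyEl b 1 = 1 := by
    have h₁ : polyEl 1 a * polyEl a b = polyEl 1 b := by simpa using polyEl_mul_polyEl_mul 1 a 1 b
    have h₂ : polyEl 1 b * polyEl b 1 = polyEl 1 1 := by simpa using polyEl_mul_polyEl_mul 1 b 1 1
    rw [h₁, h₂, one_def]
  refine isOpen_singleton_of_finite_mem_nhds _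
    ((hcont.isOpen_preimage _ isOpen_singleton_one).mem_nhds hab)
    (((finite_setOf_suffix a).image2 polyEl (finite_setOf_suffix b)).subset ?_)
  intro y hy
  obtain ⟨c, d, rfl, hc, hd⟩ := exists_suffix_of_polyEl_mul_mul_polyEl_eq_one hy
  exact Set.mem_image2_of_mem hc hd

theorem isOpen_U0 [Nontrivial ι] {A : Set (FreeMonoid ι)} (hA : A.Finite) : IsOpen (U0 A) := by
  refine isOpen_iff_mem_nhds.mpr fun x hx => ?_
  obtain rfl | ⟨a, b, rfl⟩ := eq_zero_or_eq_polyEl x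
  · have hmul_inv : Continuous fun y : PolyMon ι => y * y⁻¹ := by fun_prop
    have hinv_mul : Continuous fun y : PolyMon ι => y⁻¹ * y := by fun_prop
    have hA0 : ∀ᶠ y in 𝓝 (0 : PolyMon ι), ∀ u ∈ A, y * y⁻¹ ≠ polyEl u u ∧ y⁻¹ * y ≠ polyEl u u :=
      (Filter.eventually_all_finite hA).mpr fun u _ =>
        (hmul_inv.continuousAt.eventually_ne (polyEl_ne_zero u u).symm).and
          (hinv_mul.continuousAt.eventually_ne (polyEl_ne_zero u u).symm)
    filter_upwards [hA0] with y hy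
    obtain rfl | ⟨c, d, rfl⟩ := eq_zero_or_eq_polyEl y
    · exact .inl rfl
    refine .inr ⟨c, d, fun hc => (hy c hc).1 (polyEl_mul_inv c d),
      fun hd => (hy d hd).2 (inv_mul_polyEl c d), rfl⟩
  · exact Filter.mem_of_superset ((isOpen_singleton_polyEl a b).mem_nhds rfl)
      (Set.singleton_subset_iff.mpr hx)

theorem le_tauMi [Nontrivial ι] : ‹TopologicalSpace (PolyMon ι)› ≤ tauMi ι := by
  refine le_generateFrom ?_
  rintro s (⟨x, hx, rfl⟩ | ⟨A, hA, rfl⟩)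
  · obtain rfl | ⟨a, b, rfl⟩ := eq_zero_or_eq_polyEl x
    exacts [absurd rfl hx, isOpen_singleton_polyEl a b]
  · exact isOpen_U0 hA

end Topology

end PolyMon

/-- For an infinite cardinal λ, `τ_mi` is the coarsest inverse semigroup topology on the
λ-polycyclic monoid `P_λ`: every Hausdorff topology `t` making `P_λ` a topological inverse
semigroup contains `τ_mi` (every `τ_mi`-open set is `t`-open). In particular `τ_mi` is a
minimal inverse semigroup topology: any such `t` coarser than `τ_mi` equals `τ_mi`. -/
theorem statement_15 (ι : Type u) [Infinite ι] :
    (∀ t : TopologicalSpace (PolyMon ι),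
      @T2Space (PolyMon ι) t → @ContinuousMul (PolyMon ι) t _ → @ContinuousInv (PolyMon ι) t _ →
      ∀ U : Set (PolyMon ι), @IsOpen (PolyMon ι) (tauMi ι) U → @IsOpen (PolyMon ι) t U) ∧
    (∀ t : TopologicalSpace (PolyMon ι),
      @T2Space (PolyMon ι) t → @ContinuousMul (PolyMon ι) t _ → @ContinuousInv (PolyMon ι) t _ →
      (∀ U : Set (PolyMon ι), @IsOpen (PolyMon ι) t U → @IsOpen (PolyMon ι) (tauMi ι) U) →
      t = tauMi ι) := by
  have finer : ∀ t : TopologicalSpace (PolyMon ι), @T2Space _ t → @ContinuousMul _ t _ →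
      @ContinuousInv _ t _ → t ≤ tauMi ι := fun _ _ _ _ => PolyMon.le_tauMi
  exact ⟨fun t h2 hmul hinv _ hU => hU.mono (finer t h2 hmul hinv),
    fun t h2 hmul hinv hle =>
      le_antisymm (finer t h2 hmul hinv) (isOpen_implies_isOpen_iff.mp hle)⟩
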